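/- Let n ≥ 2, R > 0, L ∈ (0, 1/2), and let γ : B'_R(0) ⊂ ℝ^{n−1} → ℝ be Lipschitz with Lipschitz constant L and γ(0) = 0. Set Ω_R = { (x', x_n) ∈ B_R(0) ⊂ ℝⁿ : x_n > γ(x') }. Then for any ε ≤ (1 − 2L)/(2 + L), the set Ω_R is star-shaped with respect to every point of the ball B of radius εR centered at (0, (1−ε)R); in particular B ⊂ Ω_R and for every x ∈ Ω_R, y ∈ B, and t ∈ (0,1), the point (1−t)y + tx lies in Ω_R. -/

import Mathlib

/- Common infrastructure: Euclidean space, test functions, weak gradients,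
Sobolev-type membership, Lorentz norms, Lipschitz domains, and weak forms of
the (perturbed) Stokes system. -/

open MeasureTheory ENNReal Set Metric

noncomputable section

abbrev En (n : ℕ) : Type := EuclideanSpace ℝ (Fin n)
abbrev Mat (n : ℕ) : Type := EuclideanSpace ℝ (Fin n × Fin n)

variable {n : ℕ}

/-- Partial derivative in direction `i`. -/
def pd (i : Fin n) (φ : En n → ℝ) (x : En n) : ℝ :=
  fderiv ℝ φ x (EuclideanSpace.single i 1)

/-- Scalar test function compactly supported in `Ω`. -/
def IsTest (Ω : Set (En n)) (φ : En n → ℝ) : Prop :=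
  ContDiff ℝ (⊤ : ℕ∞) φ ∧ HasCompactSupport φ ∧ tsupport φ ⊆ Ω

/-- Vector test field compactly supported in `Ω`. -/
def IsTestV (Ω : Set (En n)) (φ : En n → En n) : Prop :=
  ContDiff ℝ (⊤ : ℕ∞) φ ∧ HasCompactSupport φ ∧ tsupport φ ⊆ Ω

/-- Divergence of a smooth vector field. -/
def divV (φ : En n → En n) (x : En n) : ℝ :=
  ∑ i, pd i (fun y => φ y i) x

/-- Gradient (Jacobian matrix) of a smooth vector field, `(i,j) ↦ ∂ᵢ φⱼ`. -/
def gradV (φ : En n → En n) (x : En n) : Mat n :=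
  WithLp.toLp 2 (fun ij => pd ij.1 (fun y => φ y ij.2) x)

/-- Gradient of a smooth scalar function. -/
def gradS (φ : En n → ℝ) (x : En n) : En n :=
  WithLp.toLp 2 (fun i => pd i φ x)

/-- `G` is the weak (distributional) gradient of the vector field `u` on `Ω`,
`G x (i,j) = ∂ᵢ uⱼ (x)`. -/
def HasWeakGrad (Ω : Set (En n)) (u : En n → En n) (G : En n → Mat n) : Prop :=
  ∀ (i j : Fin n) (φ : En n → ℝ), IsTest Ω φ →
    ∫ x in Ω, pd i φ x * u x j = - ∫ x in Ω, φ x * G x (i, j)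

/-- `g` is the weak gradient of the scalar function `u` on `Ω`. -/
def HasWeakGradS (Ω : Set (En n)) (u : En n → ℝ) (g : En n → En n) : Prop :=
  ∀ (i : Fin n) (φ : En n → ℝ), IsTest Ω φ →
    ∫ x in Ω, pd i φ x * u x = - ∫ x in Ω, φ x * g x i

/-- The `W^{1,q}(Ω)` norm of a vector field `u` with weak gradient `G`. -/
def W1Norm (Ω : Set (En n)) (q : ℝ≥0∞) (u : En n → En n) (G : En n → Mat n) : ℝ≥0∞ :=
  eLpNorm u q (volume.restrict Ω) + eLpNorm G q (volume.restrict Ω)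

/-- The `W^{1,q}(Ω)` norm of a scalar function `u` with weak gradient `g`. -/
def W1NormS (Ω : Set (En n)) (q : ℝ≥0∞) (u : En n → ℝ) (g : En n → En n) : ℝ≥0∞ :=
  eLpNorm u q (volume.restrict Ω) + eLpNorm g q (volume.restrict Ω)

/-- Membership in `W^{1,q}(Ω)^n`. -/
def MemW1q (Ω : Set (En n)) (q : ℝ≥0∞) (u : En n → En n) (G : En n → Mat n) : Prop :=
  Measurable u ∧ Measurable G ∧ W1Norm Ω q u G < ⊤ ∧ HasWeakGrad Ω u G

/-- Membership in `W^{1,q}_0(Ω)^n`: Sobolev regularity plus approximability by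
test fields in the `W^{1,q}` norm. -/
def MemW1q0 (Ω : Set (En n)) (q : ℝ≥0∞) (u : En n → En n) (G : En n → Mat n) : Prop :=
  MemW1q Ω q u G ∧
  ∀ ε : ℝ, 0 < ε → ∃ φ : En n → En n, IsTestV Ω φ ∧
    eLpNorm (fun x => u x - φ x) q (volume.restrict Ω)
      + eLpNorm (fun x => G x - gradV φ x) q (volume.restrict Ω) ≤ ENNReal.ofReal ε

/-- Membership in `W^{1,q}(Ω)` (scalar). -/
def MemW1qS (Ω : Set (En n)) (q : ℝ≥0∞) (u : En n → ℝ) (g : En n → En n) : Prop :=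
  Measurable u ∧ Measurable g ∧ W1NormS Ω q u g < ⊤ ∧ HasWeakGradS Ω u g

/-- Membership in `W^{1,q}_0(Ω)` (scalar). -/
def MemW1q0S (Ω : Set (En n)) (q : ℝ≥0∞) (u : En n → ℝ) (g : En n → En n) : Prop :=
  MemW1qS Ω q u g ∧
  ∀ ε : ℝ, 0 < ε → ∃ φ : En n → ℝ, IsTest Ω φ ∧
    eLpNorm (fun x => u x - φ x) q (volume.restrict Ω)
      + eLpNorm (fun x => g x - gradS φ x) q (volume.restrict Ω) ≤ ENNReal.ofReal ε

/-- `div b = 0` in the distributional sense on `Ω`. -/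
def DivFree (Ω : Set (En n)) (b : En n → En n) : Prop :=
  ∀ φ : En n → ℝ, IsTest Ω φ → ∫ x in Ω, ∑ i, b x i * pd i φ x = 0

/-- `div b ≥ 0` in the distributional sense on `Ω`. -/
def DivNonneg (Ω : Set (En n)) (b : En n → En n) : Prop :=
  ∀ φ : En n → ℝ, IsTest Ω φ → (∀ x, 0 ≤ φ x) →
    ∫ x in Ω, ∑ i, b x i * pd i φ x ≤ 0

/-- The weak `L^p` (Lorentz `L^{p,∞}`) quasinorm. -/
def wLpNorm {α : Type*} [MeasurableSpace α] (μ : Measure α) (p : ℝ)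
    {F : Type*} [Norm F] (f : α → F) : ℝ≥0∞ :=
  ⨆ s : NNReal, (s : ℝ≥0∞) * (μ {x | (s : ℝ) < ‖f x‖}) ^ (1 / p)

/-- Decreasing rearrangement of `f` with respect to `μ`. -/
def rearr {α : Type*} [MeasurableSpace α] (μ : Measure α) {F : Type*} [Norm F]
    (f : α → F) (t : ℝ) : ℝ≥0∞ :=
  sInf {s : ℝ≥0∞ | μ {x | s < ENNReal.ofReal ‖f x‖} ≤ ENNReal.ofReal t}

/-- The Lorentz `L^{p,q}` quasinorm (first exponent `p` finite, second `q ∈ (0,∞]`). -/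
def lorentzNorm {α : Type*} [MeasurableSpace α] (μ : Measure α) (p : ℝ) (q : ℝ≥0∞)
    {F : Type*} [Norm F] (f : α → F) : ℝ≥0∞ :=
  if q = ∞ then ⨆ t : {t : ℝ // 0 < t}, ENNReal.ofReal (t.1 ^ (1 / p)) * rearr μ f t.1
  else (∫⁻ t in Set.Ioi (0 : ℝ),
      ENNReal.ofReal (t ^ (q.toReal / p - 1)) * (rearr μ f t) ^ q.toReal) ^ (1 / q.toReal)

/-- A bounded Lipschitz domain with Lipschitz constant `L`: near each boundary point,
after a rigid motion, `Ω` coincides with the region above the graph of an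
`L`-Lipschitz function. -/
def IsBddLipschitzDomain (Ω : Set (En n)) (L : ℝ) : Prop :=
  IsOpen Ω ∧ Bornology.IsBounded Ω ∧ Ω.Nonempty ∧
  ∀ x₀ ∈ frontier Ω, ∃ r : ℝ, 0 < r ∧ ∃ v : En n, ‖v‖ = 1 ∧ ∃ γ : En n → ℝ,
    LipschitzWith (Real.toNNReal L) γ ∧
    ∀ x ∈ Metric.ball x₀ r,
      (x ∈ Ω ↔ γ ((x - x₀) - (inner ℝ (x - x₀) v : ℝ) • v) < (inner ℝ (x - x₀) v : ℝ))

/-- The region above the graph of `γ` (in the unit direction `v`) inside `B_R(0)`. -/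
def graphDomain (R : ℝ) (v : En n) (γ : En n → ℝ) : Set (En n) :=
  {x ∈ Metric.ball (0 : En n) R | γ (x - (inner ℝ x v : ℝ) • v) < (inner ℝ x v : ℝ)}

/-- Weak (distributional) form of the perturbed Stokes system
`-Δu + b·∇u + ∇π = div 𝔾` on `Ω`, for a pair `(u, π)` with `G` the weak
gradient of `u`, using `div b = 0` to write `b·∇u = div (b ⊗ u)`. -/
def PerturbedStokesPair (Ω : Set (En n)) (b : En n → En n) (𝔾 : En n → Mat n)
    (u : En n → En n) (G : En n → Mat n) (π : En n → ℝ) : Prop :=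
  ∀ ζ : En n → En n, IsTestV Ω ζ →
    ∫ x in Ω, ((∑ ij : Fin n × Fin n, (G x ij - b x ij.1 * u x ij.2) * gradV ζ x ij)
        - π x * divV ζ x)
      = - ∫ x in Ω, ∑ ij : Fin n × Fin n, 𝔾 x ij * gradV ζ x ij

/-- Weak form of the Stokes system `-Δv + ∇π = div 𝔽`, `div v = 0`, `v|_{∂Ω} = 0`,
`∫ π = 0`, for a pair `(v, π)` with `Gv` the weak gradient of `v`. -/
def StokesPair (Ω : Set (En n)) (𝔽 : En n → Mat n)
    (v : En n → En n) (Gv : En n → Mat n) (π : En n → ℝ) : Prop :=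
  MemW1q0 Ω 2 v Gv ∧ DivFree Ω v ∧ Measurable π ∧
    eLpNorm π 2 (volume.restrict Ω) < ⊤ ∧ IntegrableOn π Ω ∧ (∫ x in Ω, π x) = 0 ∧
    ∀ ζ : En n → En n, IsTestV Ω ζ →
      ∫ x in Ω, ((∑ ij : Fin n × Fin n, Gv x ij * gradV ζ x ij) - π x * divV ζ x)
        = - ∫ x in Ω, ∑ ij : Fin n × Fin n, 𝔽 x ij * gradV ζ x ij

set_option maxHeartbeats 1000000 in
/-- The epigraph domain `Ω_R = {x ∈ B_R(0) : x_n > γ(x')}`, `γ` Lipschitz with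
constant `L ∈ (0,1/2)` and `γ(0) = 0`, is star-shaped with respect to every
point of the ball of radius `εR` centered at `(0,(1-ε)R)`, whenever
`0 < ε ≤ (1-2L)/(2+L)`. -/
theorem stmt_8 (n : ℕ) (hn : 2 ≤ n) (R L : ℝ) (hR : 0 < R)
    (hL0 : 0 < L) (hL : L < 1/2)
    (v : En n) (hv : ‖v‖ = 1) (γ : En n → ℝ)
    (hγ : LipschitzWith (Real.toNNReal L) γ) (hγ0 : γ 0 = 0)
    (ε : ℝ) (hε0 : 0 < ε) (hε : ε ≤ (1 - 2*L) / (2 + L)) :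
    Metric.ball (((1 - ε) * R) • v) (ε * R) ⊆ graphDomain R v γ ∧
    ∀ x ∈ graphDomain R v γ, ∀ y ∈ Metric.ball (((1 - ε) * R) • v) (ε * R),
      ∀ t : ℝ, t ∈ Set.Ioo (0 : ℝ) 1 →
        (1 - t) • y + t • x ∈ graphDomain R v γ := by
  
  -- basic numeric facts
  have h2L : (0:ℝ) < 2 + L := by linarith
  have hεL : ε * (2 + L) ≤ 1 - 2*L := by
    calc ε * (2+L) ≤ ((1-2*L)/(2+L)) * (2+L) := by
          exact mul_le_mul_of_nonneg_right hε h2L.le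
      _ = 1 - 2*L := div_mul_cancel₀ _ (ne_of_gt h2L)
  have hε1 : ε < 1 := by nlinarith
  -- Lipschitz estimates
  have hlip : ∀ p q : En n, γ p ≤ γ q + L * ‖p - q‖ := by
    intro p q
    have h := hγ.dist_le_mul p q
    rw [Real.dist_eq, dist_eq_norm, Real.coe_toNNReal L hL0.le] at h
    have h2 := le_abs_self (γ p - γ q)
    linarith [h2.trans h]
  have hγle : ∀ p : En n, γ p ≤ L * ‖p‖ := by
    intro p
    have := hlip p 0
    simpa [hγ0] using this
  -- projection onto the hyperplane orthogonal to v
  set P : En n → En n := fun p => p - (inner ℝ p v : ℝ) • v with hP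
  have hPnorm : ∀ p : En n, ‖P p‖ ≤ ‖p‖ := by
    intro p
    have h1 : ‖P p‖^2 = ‖p‖^2 - (inner ℝ p v : ℝ)^2 := by
      rw [hP]
      simp only
      rw [norm_sub_sq_real, real_inner_smul_right, norm_smul, hv]
      simp [mul_pow, sq_abs]
      ring
    nlinarith [norm_nonneg (P p), norm_nonneg p, sq_nonneg (inner ℝ p v : ℝ)]
  -- facts about points of the small ball
  have hball : ∀ y ∈ Metric.ball (((1 - ε) * R) • v) (ε * R),
      ‖P y‖ < ε*R ∧ (1-2*ε)*R < (inner ℝ y v : ℝ) ∧ ‖y‖ < R := by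
    intro y hy
    rw [mem_ball, dist_eq_norm] at hy
    set w := y - ((1-ε)*R) • v with hw
    have hwv : |(inner ℝ w v : ℝ)| ≤ ‖w‖ := by
      have h := abs_real_inner_le_norm w v
      simpa [hv] using h
    have hvv : (inner ℝ v v : ℝ) = 1 := by
      rw [real_inner_self_eq_norm_sq, hv]; norm_num
    have hyv : (inner ℝ y v : ℝ) = inner ℝ w v + (1-ε)*R := by
      have : y = w + ((1-ε)*R) • v := by rw [hw]; module
      rw [this, inner_add_left, real_inner_smul_left, hvv]
      ring
    have hPyw : P y = P w := by
      simp only [hP, hyv]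
      rw [hw]
      module
    refine ⟨?_, ?_, ?_⟩
    · rw [hPyw]
      exact lt_of_le_of_lt (hPnorm w) hy
    · rw [hyv]
      have := (abs_le.mp hwv).1
      nlinarith
    · have h1 : y = w + ((1-ε)*R) • v := by rw [hw]; module
      have h2 : ‖y‖ ≤ ‖w‖ + ‖((1-ε)*R) • v‖ := by rw [h1]; exact norm_add_le _ _
      rw [norm_smul, hv] at h2
      have h3 : ‖(1-ε)*R‖ = (1-ε)*R := by
        rw [Real.norm_eq_abs]; exact abs_of_nonneg (by nlinarith)
      rw [h3] at h2
      nlinarith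
  -- membership criterion for graphDomain
  have hmem : ∀ p : En n, ‖p‖ < R → γ (P p) < (inner ℝ p v : ℝ) →
      p ∈ graphDomain R v γ := by
    intro p h1 h2
    refine ⟨?_, h2⟩
    simpa [mem_ball, dist_zero_right] using h1
  constructor
  · -- the ball is contained in the domain
    intro y hy
    obtain ⟨hy1, hy2, hy3⟩ := hball y hy
    refine hmem y hy3 ?_
    have h1 : γ (P y) ≤ L * ‖P y‖ := hγle _
    nlinarith [mul_lt_mul_of_pos_left hy1 hL0, mul_le_mul_of_nonneg_right hεL hR.le]
  · -- star-shapedness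
    intro x hx y hy t ht
    obtain ⟨ht0, ht1⟩ := ht
    obtain ⟨hy1, hy2, hy3⟩ := hball y hy
    obtain ⟨hxb, hxg⟩ := hx
    have hx1 : ‖x‖ < R := by simpa [mem_ball, dist_zero_right] using hxb
    have hx2 : γ (P x) < (inner ℝ x v : ℝ) := hxg
    set a := (inner ℝ x v : ℝ) with ha
    set b := (inner ℝ y v : ℝ) with hb
    set z := (1 - t) • y + t • x with hz
    have hzv : (inner ℝ z v : ℝ) = (1-t)*b + t*a := by
      rw [hz, inner_add_left, real_inner_smul_left, real_inner_smul_left]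
    have hPz : P z = (1-t) • (P y) + t • (P x) := by
      simp only [hP, hzv]
      rw [hz]
      module
    have hPzx : P z - P x = (1-t) • (P y - P x) := by
      rw [hPz]; module
    set D := ‖P y - P x‖ with hD
    have hDle : D ≤ ‖P y‖ + ‖P x‖ := norm_sub_le _ _
    have hPx : ‖P x‖ ≤ ‖x‖ := hPnorm x
    have hγz : γ (P z) ≤ γ (P x) + L * ((1-t) * D) := by
      have h := hlip (P z) (P x)
      rw [hPzx, norm_smul, Real.norm_eq_abs, abs_of_nonneg (by linarith : (0:ℝ) ≤ 1-t)] at h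
      exact h
    have hzn : ‖z‖ < R := by
      have h := norm_add_le ((1-t) • y) (t • x)
      rw [← hz, norm_smul, norm_smul, Real.norm_eq_abs, Real.norm_eq_abs,
        abs_of_nonneg (by linarith : (0:ℝ) ≤ 1-t), abs_of_nonneg ht0.le] at h
      have e1 : (1-t)*‖y‖ < (1-t)*R := mul_lt_mul_of_pos_left hy3 (by linarith)
      have e2 : t*‖x‖ < t*R := mul_lt_mul_of_pos_left hx1 ht0
      linarith
    -- the key inequality : b > γ(x') + L * D
    have hkey : γ (P x) + L * D < b := by
      have e1 : L * D ≤ L * (‖P y‖ + ‖P x‖) := mul_le_mul_of_nonneg_left hDle hL0.le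
      have e2 : L * ‖P y‖ < L * (ε * R) := mul_lt_mul_of_pos_left hy1 hL0
      have e3 : L * ‖P x‖ < L * R := mul_lt_mul_of_pos_left (lt_of_le_of_lt hPx hx1) hL0
      have e4 : γ (P x) ≤ L * ‖P x‖ := hγle _
      have e5 : (ε * (2+L)) * R ≤ (1 - 2*L) * R := mul_le_mul_of_nonneg_right hεL hR.le
      linarith
    refine hmem z hzn ?_
    rw [hzv]
    have k1 : (0:ℝ) < (1-t) * (b - γ (P x) - L * D) :=
      mul_pos (by linarith only [ht1]) (by linarith only [hkey])
    have k2 : (0:ℝ) < t * (a - γ (P x)) := mul_pos ht0 (by linarith only [hx2])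
    nlinarith [k1, k2, hγz]
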